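/- arXiv:2005.07120 — 4 statements merged into one kernel-verified Lean document; each statement's English description precedes it below -/
import Mathlib

section
/- Let p be a prime number and λ an infinite cardinal with λ^ℵ₀ = λ. Then there is a universal abelian p-group for purity of cardinality λ: an abelian p-group U with |U| = λ such that every abelian p-group G with |G| ≤ λ admits a pure embedding into U. -/
/-- An abelian `p`-group: every element is annihilated by some power of `p`,
i.e. every element has order `p ^ n` for some natural number `n`. -/
def IsAbelianPGroup (p : ℕ) (G : Type) [AddCommGroup G] : Prop :=
  ∀ g : G, ∃ n : ℕ, p ^ n • g = 0

/-- A pure embedding: an injective group homomorphism whose image is a pure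
subgroup, i.e. `n U ∩ f[G] = n f[G]` for every natural number `n`. -/
def IsPureEmbedding {G U : Type} [AddCommGroup G] [AddCommGroup U] (f : G →+ U) : Prop :=
  Function.Injective f ∧ ∀ (n : ℕ) (g : G), (∃ u : U, n • u = f g) → ∃ g' : G, n • g' = g

/-- There is a universal abelian `p`-group for purity of cardinality `lam`. -/
def HasUniversalPGroup (p : ℕ) (lam : Cardinal) : Prop :=
  ∃ (U : Type) (_ : AddCommGroup U), IsAbelianPGroup p U ∧ Cardinal.mk U = lam ∧
    ∀ (G : Type) (_ : AddCommGroup G), IsAbelianPGroup p G → Cardinal.mk G ≤ lam →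
      ∃ f : G →+ U, IsPureEmbedding f

/-!
Let `D = ⊕_λ ℝ/ℤ`. It is divisible, hence injective, so every `p`-group `H` with `|H| ≤ λ`
embeds in `D`: embed the socle `H[p]`, an `𝔽_p`-vector space of dimension at most `λ`, and
extend; a homomorphism of a `p`-group that is injective on the socle is injective.

Take `U` to be the `p`-primary part of `D × ∏ₖ D[pᵏ]` and send `g ∈ G` to
`(φ g, (eₖ (g + pᵏG))ₖ)`, where `φ : G ↪ D` and `eₖ : G/pᵏG ↪ D`. If `pᵏ • u = f g`, the
`k`-th coordinate gives `eₖ (g + pᵏG) = pᵏ • uₖ = 0`, so `g ∈ pᵏG`; since multiplication by an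
integer prime to `p` is surjective on a `p`-group, the image is pure. The hypothesis
`λ^ℵ₀ = λ` bounds the countable product and gives `|ℝ/ℤ| = 2^ℵ₀ ≤ λ`.
-/

open Cardinal

namespace IsAbelianPGroup

variable {p : ℕ} {G H : Type} [AddCommGroup G] [AddCommGroup H]

theorem of_surjective (hG : IsAbelianPGroup p G) {f : G →+ H} (hf : Function.Surjective f) :
    IsAbelianPGroup p H := by
  intro h
  obtain ⟨g, rfl⟩ := hf h
  obtain ⟨n, hn⟩ := hG g
  exact ⟨n, by rw [← map_nsmul, hn, map_zero]⟩

theorem map_mem_primaryComponent (hG : IsAbelianPGroup p G) (f : G →+ H) (g : G) :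
    f g ∈ AddCommGroup.primaryComponent H p := by
  obtain ⟨n, hn⟩ := hG g
  exact AddCommGroup.mem_primaryComponent.2 ⟨n, by rw [← map_nsmul, hn, map_zero]⟩

theorem exists_nsmul_eq (hp : p.Prime) (hG : IsAbelianPGroup p G) {m : ℕ} (hm : ¬p ∣ m)
    (g : G) : ∃ y, m • y = g := by
  obtain ⟨n, hn⟩ := hG g
  have hcop : m.Coprime (addOrderOf g) :=
    (Nat.Coprime.pow_right n ((hp.coprime_iff_not_dvd).2 hm).symm).coprime_dvd_right
      (addOrderOf_dvd_of_nsmul_eq_zero hn)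
  obtain ⟨k, hk⟩ := exists_nsmul_eq_self_of_coprime hcop
  exact ⟨k • g, by rwa [smul_comm]⟩

theorem injective_of_injective_comp_torsionBy (hG : IsAbelianPGroup p G) (f : G →+ H)
    (hf : Function.Injective (f.comp (AddSubgroup.torsionBy G p).subtype)) :
    Function.Injective f := by
  have hsocle : ∀ x : G, p • x = 0 → f x = 0 → x = 0 := fun x hx hfx =>
    congrArg Subtype.val (hf (a₁ := ⟨x, AddSubgroup.torsionBy.nsmul_iff.2 hx⟩) (a₂ := 0)
      (by simpa using hfx))
  refine (injective_iff_map_eq_zero f).2 fun g hg => ?_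
  obtain ⟨n, hn⟩ := hG g
  induction n generalizing g with
  | zero => simpa using hn
  | succ n ih =>
    refine hsocle g (ih (p • g) (by rw [map_nsmul, hg, smul_zero]) ?_) hg
    rwa [← mul_smul, ← pow_succ]

theorem isPureEmbedding_of_forall_pow_smul (hp : p.Prime) (hG : IsAbelianPGroup p G)
    {f : G →+ H} (hf : Function.Injective f)
    (hpure : ∀ (k : ℕ) (g : G) (u : H), p ^ k • u = f g → ∃ g', p ^ k • g' = g) :
    IsPureEmbedding f := by
  refine ⟨hf, fun n g ⟨u, hu⟩ => ?_⟩
  rcases eq_or_ne n 0 with rfl | hn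
  · rw [zero_smul, eq_comm, map_eq_zero_iff f hf] at hu
    exact ⟨0, by rw [hu, zero_smul]⟩
  obtain ⟨k, m, hm, rfl⟩ := Nat.exists_eq_pow_mul_and_not_dvd hn p hp.ne_one
  obtain ⟨g₁, rfl⟩ := hpure k g (m • u) (by rwa [← mul_smul])
  obtain ⟨y, rfl⟩ := hG.exists_nsmul_eq hp hm g₁
  exact ⟨y, mul_smul _ _ _⟩

end IsAbelianPGroup

noncomputable instance Finsupp.divisibleByInt {I A : Type*} [AddCommGroup A] [DivisibleBy A ℤ] :
    DivisibleBy (I →₀ A) ℤ :=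
  divisibleByOfSMulRightSurj _ _ fun hn f => by
    obtain ⟨g, rfl⟩ :=
      Finsupp.mapRange_surjective _ (smul_zero _) (DivisibleBy.surjective_smul A ℤ hn) f
    exact ⟨g, by ext; simp⟩

theorem exists_injective_torsionBy_finsupp {p : ℕ} (hp : p.Prime) {G I : Type} [AddCommGroup G]
    (hcard : #G ≤ #I) :
    ∃ ψ : AddSubgroup.torsionBy G p →+ (I →₀ ZMod p), Function.Injective ψ := by
  have : Fact p.Prime := ⟨hp⟩
  let _ := AddSubgroup.torsionBy.zmodModule (A := G) (n := p)
  let B := Module.Basis.ofVectorSpace (ZMod p) (AddSubgroup.torsionBy G p)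
  obtain ⟨u⟩ : Nonempty
      (Module.Basis.ofVectorSpaceIndex (ZMod p) (AddSubgroup.torsionBy G p) ↪ I) :=
    Cardinal.le_def _ _ |>.1 <| (mk_subtype_le _).trans <| (mk_subtype_le _).trans hcard
  exact ⟨(Finsupp.embDomain.addMonoidHom u).comp B.repr.toLinearMap.toAddMonoidHom,
    (Finsupp.embDomain_injective u).comp B.repr.injective⟩

theorem IsAbelianPGroup.exists_injective_finsupp {p : ℕ} (hp : p.Prime) {G I A : Type}
    [AddCommGroup G] [AddCommGroup A] [DivisibleBy A ℤ] (hG : IsAbelianPGroup p G)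
    {θ : ZMod p →+ A} (hθ : Function.Injective θ) (hcard : #G ≤ #I) :
    ∃ φ : G →+ (I →₀ A), Function.Injective φ := by
  obtain ⟨ψ, hψ⟩ := exists_injective_torsionBy_finsupp hp hcard
  obtain ⟨φ, hφ⟩ := (Module.Baer.of_divisible (I →₀ A)).extension_property_addMonoidHom
    _ (AddSubgroup.subtype_injective _) ((Finsupp.mapRange.addMonoidHom θ).comp ψ)
  refine ⟨φ, hG.injective_of_injective_comp_torsionBy φ ?_⟩
  rw [hφ]
  exact (Finsupp.mapRange_injective _ (map_zero θ) hθ).comp hψ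

section Universal

variable (p : ℕ) (D : Type) [AddCommGroup D]

def universalPGroup : AddSubgroup (D × (ℕ → D)) :=
  AddCommGroup.primaryComponent _ p ⊓
    (AddSubgroup.pi Set.univ fun k => AddSubgroup.torsionBy D ↑(p ^ k)).comap
      (AddMonoidHom.snd _ _)

variable {p D}

theorem mem_universalPGroup {u : D × (ℕ → D)} :
    u ∈ universalPGroup p D ↔
      u ∈ AddCommGroup.primaryComponent _ p ∧ ∀ k, p ^ k • u.2 k = 0 := by
  simp only [universalPGroup, AddSubgroup.mem_inf, AddSubgroup.mem_comap, AddSubgroup.mem_pi,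
    Set.mem_univ, forall_const, AddSubgroup.torsionBy.nsmul_iff, AddMonoidHom.coe_snd]

theorem isAbelianPGroup_universalPGroup : IsAbelianPGroup p (universalPGroup p D) := by
  intro u
  obtain ⟨n, hn⟩ := AddCommGroup.mem_primaryComponent.1 (mem_universalPGroup.1 u.2).1
  exact ⟨n, Subtype.ext hn⟩

theorem mk_universalPGroup_le {κ : Cardinal} (hD : #D ≤ κ) (hκ : ℵ₀ ≤ κ) (h : κ ^ ℵ₀ = κ) :
    #(universalPGroup p D) ≤ κ :=
  calc #(universalPGroup p D) ≤ #(D × (ℕ → D)) := mk_subtype_le _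
    _ = #D * #D ^ ℵ₀ := by rw [mk_prod, lift_id, lift_id, ← power_def, mk_nat]
    _ ≤ κ * κ ^ ℵ₀ := mul_le_mul' hD (power_le_power_right hD)
    _ = κ := by rw [h, mul_eq_self hκ]

theorem exists_isPureEmbedding_universalPGroup (hp : p.Prime) {G : Type} [AddCommGroup G]
    (hG : IsAbelianPGroup p G) {φ : G →+ D} (hφ : Function.Injective φ)
    {e : ∀ k, G ⧸ (nsmulAddMonoidHom (p ^ k) : G →+ G).range →+ D}
    (he : ∀ k, Function.Injective (e k)) :
    ∃ f : G →+ universalPGroup p D, IsPureEmbedding f := by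
  let F : G →+ D × (ℕ → D) :=
    φ.prod (AddMonoidHom.pi fun k => (e k).comp (QuotientAddGroup.mk' _))
  have hF : ∀ g, F g ∈ universalPGroup p D := fun g =>
    mem_universalPGroup.2 ⟨hG.map_mem_primaryComponent F g, fun k => by
      simp only [F, AddMonoidHom.prod_apply, AddMonoidHom.pi_apply, AddMonoidHom.comp_apply,
        QuotientAddGroup.mk'_apply]
      rw [← map_nsmul, ← QuotientAddGroup.mk_nsmul]
      convert map_zero (e k)
      exact (QuotientAddGroup.eq_zero_iff _).2 ⟨g, rfl⟩⟩
  have hinj : Function.Injective (F.codRestrict _ hF) := fun a b hab =>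
    hφ (by simpa [F] using congrArg (fun u : universalPGroup p D => (u : D × (ℕ → D)).1) hab)
  refine ⟨F.codRestrict _ hF, hG.isPureEmbedding_of_forall_pow_smul hp hinj fun k g u hu => ?_⟩
  have hgk : e k (g : G ⧸ _) = 0 := by
    have := congrArg (fun u : universalPGroup p D => (u : D × (ℕ → D)).2 k) hu
    simp only [AddSubmonoidClass.coe_nsmul, Prod.smul_snd, Pi.smul_apply,
      AddMonoidHom.codRestrict_apply, AddMonoidHom.prod_apply, AddMonoidHom.pi_apply,
      AddMonoidHom.coe_comp, QuotientAddGroup.coe_mk', Function.comp_apply, F] at this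
    rw [← this, (mem_universalPGroup.1 u.2).2 k]
  simpa using (QuotientAddGroup.eq_zero_iff g).1 ((map_eq_zero_iff _ (he k)).1 hgk)

end Universal

theorem IsAbelianPGroup.exists_isPureEmbedding_universalPGroup_finsupp {p : ℕ} (hp : p.Prime)
    {G I A : Type} [AddCommGroup G] [AddCommGroup A] [DivisibleBy A ℤ]
    (hG : IsAbelianPGroup p G) {θ : ZMod p →+ A} (hθ : Function.Injective θ) (hcard : #G ≤ #I) :
    ∃ f : G →+ universalPGroup p (I →₀ A), IsPureEmbedding f := by
  obtain ⟨φ, hφ⟩ := hG.exists_injective_finsupp hp hθ hcard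
  have levels : ∀ k, ∃ e : G ⧸ (nsmulAddMonoidHom (p ^ k) : G →+ G).range →+ (I →₀ A),
      Function.Injective e := fun k =>
    (hG.of_surjective (QuotientAddGroup.mk'_surjective _)).exists_injective_finsupp hp hθ
      ((mk_le_of_surjective QuotientAddGroup.mk_surjective).trans hcard)
  choose e he using levels
  exact exists_isPureEmbedding_universalPGroup hp hG hφ he

theorem mk_unitAddCircle_le {κ : Cardinal} (hκ : ℵ₀ ≤ κ) (h : κ ^ ℵ₀ = κ) :
    #UnitAddCircle ≤ κ :=
  calc #UnitAddCircle ≤ #ℝ := mk_le_of_surjective QuotientAddGroup.mk_surjective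
    _ = 2 ^ ℵ₀ := by rw [mk_real, two_power_aleph0]
    _ ≤ κ ^ ℵ₀ := power_le_power_right ((natCast_lt_aleph0 (n := 2)).le.trans hκ)
    _ = κ := h

theorem universal_p_group_of_pow_aleph0_eq (p : ℕ) (hp : p.Prime) (lam : Cardinal)
    (hlam : Cardinal.aleph0 ≤ lam) (h : lam ^ Cardinal.aleph0 = lam) :
    HasUniversalPGroup p lam := by
  have : NeZero p := ⟨hp.ne_zero⟩
  have : Fact p.Prime := ⟨hp⟩
  obtain ⟨I, rfl⟩ : ∃ I : Type, #I = lam := ⟨_, mk_out lam⟩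
  have : Infinite I := Cardinal.infinite_iff.2 hlam
  have embed {G : Type} [AddCommGroup G] (hG : IsAbelianPGroup p G) (hcard : #G ≤ #I) :=
    hG.exists_isPureEmbedding_universalPGroup_finsupp hp (ZMod.toAddCircle_injective p) hcard
  have hD : #(I →₀ UnitAddCircle) ≤ #I := by
    have : Nontrivial UnitAddCircle := (ZMod.toAddCircle_injective p).nontrivial
    rw [mk_finsupp_of_infinite]
    exact max_le le_rfl (mk_unitAddCircle_le hlam h)
  refine ⟨universalPGroup p (I →₀ UnitAddCircle), inferInstance, isAbelianPGroup_universalPGroup,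
    le_antisymm (mk_universalPGroup_le hD hlam h) ?_, fun G _ hG hcard => embed hG hcard⟩
  have hV : IsAbelianPGroup p (I →₀ ZMod p) := fun v => ⟨1, by ext; simp⟩
  obtain ⟨f, hf, -⟩ := embed hV (by
    rw [mk_finsupp_of_infinite]
    exact max_le le_rfl ((lt_aleph0_of_finite _).le.trans hlam))
  calc #I ≤ #(I →₀ ZMod p) := mk_le_of_injective (Finsupp.single_left_injective one_ne_zero)
    _ ≤ _ := mk_le_of_injective hf
end

section
/- Let p be a prime number and λ an infinite cardinal. If G is an abelian group with |G| = λ such that every abelian group H with |H| ≤ λ admits a pure embedding into G, then the p-torsion subgroup t_p(G) = { g ∈ G : p^n g = 0 for some n ∈ ℕ } is an abelian p-group of cardinality λ such that every abelian p-group H with |H| ≤ λ admits a pure embedding into t_p(G). -/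
/-- The `p`-torsion subgroup `t_p(G) = { g ∈ G | p ^ n • g = 0 for some n }`. -/
def pTorsion (p : ℕ) (G : Type) [AddCommGroup G] : AddSubgroup G where
  carrier := {g : G | ∃ n : ℕ, p ^ n • g = 0}
  zero_mem' := ⟨0, smul_zero _⟩
  add_mem' := by
    rintro a b ⟨m, hm⟩ ⟨n, hn⟩
    refine ⟨m + n, ?_⟩
    have ha : p ^ (m + n) • a = 0 := by
      rw [pow_add, mul_comm, mul_smul, hm, smul_zero]
    have hb : p ^ (m + n) • b = 0 := by
      rw [pow_add, mul_smul, hn, smul_zero]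
    rw [smul_add, ha, hb, add_zero]
  neg_mem' := by
    rintro a ⟨n, hn⟩
    exact ⟨n, by rw [smul_neg, hn, neg_zero]⟩

/-! A pure embedding of a `p`-group lands in the `p`-torsion, and purity survives restricting the
codomain, so `t_p(G)` inherits universality for `p`-groups from `G`. Its cardinality is then
squeezed between `|G| = λ` and that of the `p`-group `⨁_λ ℤ/p`, which embeds into it. -/

open Cardinal

theorem IsPureEmbedding.codRestrict {H U : Type} [AddCommGroup H] [AddCommGroup U] {f : H →+ U}
    (hf : IsPureEmbedding f) (S : AddSubgroup U) (hS : ∀ h, f h ∈ S) :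
    IsPureEmbedding (f.codRestrict S hS) := by
  refine ⟨fun a b hab => hf.1 (congrArg Subtype.val hab), ?_⟩
  rintro n h ⟨s, hs⟩
  exact hf.2 n h ⟨s, congrArg Subtype.val hs⟩

theorem IsAbelianPGroup.map_mem_pTorsion {p : ℕ} {H G : Type} [AddCommGroup H] [AddCommGroup G]
    (hH : IsAbelianPGroup p H) (f : H →+ G) (h : H) : f h ∈ pTorsion p G := by
  obtain ⟨n, hn⟩ := hH h
  exact ⟨n, by rw [← map_nsmul, hn, map_zero]⟩

theorem isAbelianPGroup_pTorsion (p : ℕ) (G : Type) [AddCommGroup G] :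
    IsAbelianPGroup p (pTorsion p G) := by
  rintro ⟨g, n, hn⟩
  exact ⟨n, Subtype.ext hn⟩

theorem isAbelianPGroup_of_module_zmod (p : ℕ) (V : Type) [AddCommGroup V] [Module (ZMod p) V] :
    IsAbelianPGroup p V :=
  fun v => ⟨1, by rw [pow_one, ← Nat.cast_smul_eq_nsmul (ZMod p), ZMod.natCast_self, zero_smul]⟩

theorem exists_isAbelianPGroup_mk_eq {p : ℕ} (hp : 1 < p) {lam : Cardinal.{0}} (hlam : ℵ₀ ≤ lam) :
    ∃ (H : Type) (_ : AddCommGroup H), IsAbelianPGroup p H ∧ #H = lam := by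
  have : Fact (1 < p) := ⟨hp⟩
  have : Infinite lam.out := by rw [infinite_iff, mk_out]; exact hlam
  refine ⟨lam.out →₀ ZMod p, inferInstance, isAbelianPGroup_of_module_zmod p _, ?_⟩
  rw [mk_finsupp_of_infinite, mk_out]
  exact max_eq_left (mk_le_aleph0.trans hlam)

theorem pTorsion_of_universal_is_universal (p : ℕ) (hp : p.Prime)
    (lam : Cardinal) (hlam : Cardinal.aleph0 ≤ lam)
    (G : Type) [AddCommGroup G] (hG : Cardinal.mk G = lam)
    (huniv : ∀ (H : Type) (_ : AddCommGroup H), Cardinal.mk H ≤ lam →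
      ∃ f : H →+ G, IsPureEmbedding f) :
    IsAbelianPGroup p ↥(pTorsion p G) ∧ Cardinal.mk ↥(pTorsion p G) = lam ∧
      ∀ (H : Type) (_ : AddCommGroup H), IsAbelianPGroup p H → Cardinal.mk H ≤ lam →
        ∃ f : H →+ ↥(pTorsion p G), IsPureEmbedding f := by
  have embed : ∀ (H : Type) (_ : AddCommGroup H), IsAbelianPGroup p H → #H ≤ lam →
      ∃ f : H →+ pTorsion p G, IsPureEmbedding f := by
    intro H _ hHp hHle
    obtain ⟨f, hf⟩ := huniv H _ hHle
    exact ⟨_, hf.codRestrict _ (hHp.map_mem_pTorsion f)⟩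
  refine ⟨isAbelianPGroup_pTorsion p G, le_antisymm ?_ ?_, embed⟩
  · exact hG ▸ mk_subtype_le _
  · obtain ⟨H, _, hHp, hH⟩ := exists_isAbelianPGroup_mk_eq hp.one_lt hlam
    obtain ⟨f, hf, -⟩ := embed H _ hHp hH.le
    exact hH ▸ mk_le_of_injective hf
end

section
/- Let p be a prime number. There exists an abelian p-group G of cardinality ℵ₁ such that every countable abelian p-group admits a pure embedding into G. -/
open Cardinal Function Set

noncomputable section

namespace PGroupUniversal

local notation "𝕋" => AddCircle (1 : ℚ)

section PowSubgroup

variable (p : ℕ) {H : Type*} [AddCommGroup H]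

def pPowSubgroup (k : ℕ) : AddSubgroup H := (nsmulAddMonoidHom (p ^ k)).range

variable {p}

theorem pPowSubgroup_zero : pPowSubgroup p 0 = (⊤ : AddSubgroup H) :=
  eq_top_iff.2 fun g _ => ⟨g, by simp⟩

theorem pPowSubgroup_anti : Antitone (pPowSubgroup p (H := H)) := by
  rintro k l hkl _ ⟨y, rfl⟩
  refine ⟨p ^ (l - k) • y, ?_⟩
  simp only [nsmulAddMonoidHom_apply, ← mul_nsmul', ← pow_add, Nat.add_sub_cancel' hkl]

theorem exists_mem_pPowSubgroup_not_mem_succ {a : ℕ} {g : H} (hg : g ∉ pPowSubgroup p a) :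
    ∃ k < a, g ∈ pPowSubgroup p k ∧ g ∉ pPowSubgroup p (k + 1) := by
  induction a with
  | zero => simp [pPowSubgroup_zero] at hg
  | succ a ih =>
    by_cases hga : g ∈ pPowSubgroup p a
    · exact ⟨a, a.lt_succ_self, hga, hg⟩
    · obtain ⟨k, hka, hk⟩ := ih hga
      exact ⟨k, hka.trans a.lt_succ_self, hk⟩

variable (p) in
/-- The elements of height `> k`: `p ^ (k + 1) • H` for finite `k`, and `0` for `k = ⊤`. -/
def heightAbove (k : ℕ∞) : AddSubgroup H := k.recTopCoe ⊥ fun k => pPowSubgroup p (k + 1)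

@[simp] theorem heightAbove_top : heightAbove p ⊤ = (⊥ : AddSubgroup H) := rfl

@[simp]
theorem heightAbove_coe (k : ℕ) : heightAbove p k = pPowSubgroup p (k + 1) (H := H) := rfl

theorem heightAbove_le_pPowSubgroup {i : ℕ} {k : ℕ∞} (hik : i ≤ k + 1) :
    heightAbove p k ≤ pPowSubgroup p i (H := H) := by
  induction k using ENat.recTopCoe with
  | top => simp
  | coe k => exact pPowSubgroup_anti (by exact_mod_cast hik)

theorem heightAbove_anti : Antitone (heightAbove p (H := H)) := by
  intro k l hkl
  induction k using ENat.recTopCoe with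
  | top => simp [top_le_iff.1 hkl]
  | coe k => exact heightAbove_le_pPowSubgroup (by push_cast; gcongr)

end PowSubgroup

theorem pow_nsmul_eq_zero_of_le {M : Type*} [AddMonoid M] {p m n : ℕ} {x : M}
    (hx : p ^ m • x = 0) (hmn : m ≤ n) : p ^ n • x = 0 := by
  rw [← Nat.add_sub_cancel' hmn, pow_add, mul_nsmul, hx, nsmul_zero]

theorem IsAbelianPGroup.exists_nsmul_eq_of_coprime {p m : ℕ} {H : Type} [AddCommGroup H]
    (hH : IsAbelianPGroup p H) (hm : m.Coprime p) (g : H) : ∃ g', m • g' = g := by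
  obtain ⟨r, hr⟩ := hH g
  have hcop : m.Coprime (addOrderOf g) :=
    (hm.pow_right r).coprime_dvd_right (addOrderOf_dvd_of_nsmul_eq_zero hr)
  obtain ⟨c, hc⟩ := exists_nsmul_eq_self_of_coprime hcop
  exact ⟨c • g, by rw [smul_comm, hc]⟩

theorem IsAbelianPGroup.exists_nsmul_eq_of_mem_pPowSubgroup {p n : ℕ} {H : Type}
    [AddCommGroup H] (hp : p.Prime) (hH : IsAbelianPGroup p H) (hn : n ≠ 0) {g : H}
    (hg : g ∈ pPowSubgroup p (n.factorization p)) : ∃ g', n • g' = g := by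
  obtain ⟨y, rfl⟩ := hg
  obtain ⟨z, rfl⟩ := IsAbelianPGroup.exists_nsmul_eq_of_coprime hH
    ((hp.coprime_iff_not_dvd.2 (Nat.not_dvd_ordCompl hp hn)).symm) y
  refine ⟨z, ?_⟩
  conv_lhs => rw [← Nat.ordProj_mul_ordCompl_eq_self n p]
  simp [mul_nsmul']

section TorsionLevel

variable (p : ℕ)

def torsionLevel (k : ℕ∞) : AddSubgroup 𝕋 where
  carrier := {x | ∃ n : ℕ, n ≤ k ∧ p ^ n • x = 0}
  add_mem' := by
    rintro x y ⟨m, hmk, hm⟩ ⟨n, hnk, hn⟩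
    refine ⟨max m n, Nat.mono_cast.map_max.trans_le (max_le hmk hnk), ?_⟩
    rw [nsmul_add, pow_nsmul_eq_zero_of_le hm (le_max_left m n),
      pow_nsmul_eq_zero_of_le hn (le_max_right m n), add_zero]
  zero_mem' := ⟨0, by simp, nsmul_zero _⟩
  neg_mem' := by
    rintro x ⟨n, hnk, hn⟩
    exact ⟨n, hnk, by rw [smul_neg, hn, neg_zero]⟩

variable {p}

theorem pow_nsmul_eq_zero_of_mem_torsionLevel {k : ℕ∞} {a : ℕ} {x : 𝕋}
    (hx : x ∈ torsionLevel p k) (hka : k ≤ a) : p ^ a • x = 0 := by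
  obtain ⟨n, hnk, hn⟩ := hx
  exact pow_nsmul_eq_zero_of_le hn (by exact_mod_cast hnk.trans hka)

end TorsionLevel

section RestrictedSum

variable {I J M N : Type*} [AddCommGroup M] [AddCommGroup N]

/-- The direct sum of the `A i`, realised inside `I →₀ M`. -/
def restrictedSum (A : I → AddSubgroup M) : AddSubgroup (I →₀ M) :=
  (AddSubgroup.pi univ A).comap Finsupp.coeFnAddHom

theorem mem_restrictedSum {A : I → AddSubgroup M} {v : I →₀ M} :
    v ∈ restrictedSum A ↔ ∀ i, v i ∈ A i := by
  simp [restrictedSum, AddSubgroup.mem_pi]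

def finsuppOfFinite (ψ : J → N →+ M) (hψ : ∀ g, (support fun j => ψ j g).Finite) :
    N →+ (J →₀ M) where
  toFun g := Finsupp.ofSupportFinite _ (hψ g)
  map_zero' := by ext; simp [Finsupp.ofSupportFinite_coe]
  map_add' g g' := by ext; simp [Finsupp.ofSupportFinite_coe]

@[simp]
theorem finsuppOfFinite_apply (ψ : J → N →+ M) (hψ : ∀ g, (support fun j => ψ j g).Finite)
    (g : N) (j : J) : finsuppOfFinite ψ hψ g j = ψ j g := rfl

def restrictedSumLift (A : I → AddSubgroup M) (loc : J ↪ I) (ψ : J → N →+ M)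
    (hψ : ∀ g, (support fun j => ψ j g).Finite) (hA : ∀ j g, ψ j g ∈ A (loc j)) :
    N →+ restrictedSum A :=
  ((Finsupp.embDomain.addMonoidHom loc).comp (finsuppOfFinite ψ hψ)).codRestrict _ fun g =>
    mem_restrictedSum.2 fun i => by
      by_cases hi : i ∈ range loc
      · obtain ⟨j, rfl⟩ := hi
        simpa [Finsupp.embDomain_apply_self] using hA j g
      · simp [Finsupp.embDomain_of_notMem_range _ _ _ hi]

theorem restrictedSumLift_apply {A : I → AddSubgroup M} {loc : J ↪ I} {ψ : J → N →+ M}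
    {hψ : ∀ g, (support fun j => ψ j g).Finite} {hA : ∀ j g, ψ j g ∈ A (loc j)}
    (g : N) (j : J) :
    (restrictedSumLift A loc ψ hψ hA g : I →₀ M) (loc j) = ψ j g := by
  simp [restrictedSumLift, Finsupp.embDomain_apply_self]

theorem isAbelianPGroup_restrictedSum {p : ℕ} {I M : Type} [AddCommGroup M]
    (A : I → AddSubgroup M) (hA : ∀ i, ∀ x ∈ A i, ∃ n, p ^ n • x = 0) :
    IsAbelianPGroup p (restrictedSum A) := by
  rintro ⟨v, hv⟩
  choose e he using fun i => hA i (v i) (mem_restrictedSum.1 hv i)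
  refine ⟨v.support.sup e, Subtype.ext (Finsupp.ext fun i => ?_)⟩
  by_cases hi : i ∈ v.support
  · simpa using pow_nsmul_eq_zero_of_le (he i) (Finset.le_sup hi)
  · simp [Finsupp.notMem_support_iff.1 hi]

end RestrictedSum

theorem exists_addMonoidHom_circle_eq_zero_of_mem_apply_ne_zero {A : Type*} [AddCommGroup A]
    {K : AddSubgroup A} {a : A} (ha : a ∉ K) :
    ∃ c : A →+ 𝕋, (∀ k ∈ K, c k = 0) ∧ c a ≠ 0 := by
  obtain ⟨c, hc⟩ : ∃ c : A ⧸ K →+ 𝕋, c a ≠ 0 :=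
    CharacterModule.exists_character_apply_ne_zero_of_ne_zero
      (by rwa [Ne, QuotientAddGroup.eq_zero_iff])
  refine ⟨c.comp (QuotientAddGroup.mk' K), fun k hk => ?_, hc⟩
  rw [AddMonoidHom.comp_apply, QuotientAddGroup.mk'_apply,
    (QuotientAddGroup.eq_zero_iff k).2 hk, map_zero]

section Stage

variable {H : Type*} [AddCommGroup H] (x : ℕ → H)

def stage (n : ℕ) : AddSubgroup H := AddSubgroup.closure (x '' Iio n)

theorem stage_zero : stage x 0 = ⊥ := by simp [stage]

theorem stage_mono : Monotone (stage x) := fun _ _ hmn =>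
  AddSubgroup.closure_mono (image_mono (Iio_subset_Iio hmn))

theorem exists_mem_stage (hx : Surjective x) (g : H) : ∃ n, g ∈ stage x n := by
  obtain ⟨n, rfl⟩ := hx g
  exact ⟨n + 1, AddSubgroup.subset_closure (mem_image_of_mem x n.lt_succ_self)⟩

theorem finite_stage (hH : IsAddTorsion H) (n : ℕ) : (stage x n : Set H).Finite := by
  have : Finite (x '' Iio n) := ((finite_Iio n).image x).to_subtype
  have := AddCommGroup.finite_of_fg_isAddTorsion (AddSubgroup.closure (x '' Iio n))
    (hH.addSubgroup _)
  exact (AddSubgroup.closure (x '' Iio n) : Set H).toFinite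

end Stage

theorem IsAbelianPGroup.isAddTorsion {p : ℕ} {H : Type} [AddCommGroup H]
    (hH : IsAbelianPGroup p H) (hp : p ≠ 0) : IsAddTorsion H := fun g => by
  obtain ⟨n, hn⟩ := hH g
  exact isOfFinAddOrder_iff_nsmul_eq_zero.2 ⟨p ^ n, by positivity, hn⟩

section Witnesses

variable (p : ℕ) {H : Type} [AddCommGroup H] (x : ℕ → H)

/-- An element entering at stage `index + 1` whose height is exactly `height`, and which stays
independent of the earlier stages modulo the elements of larger height. -/
@[ext]
structure Witness where
  index : ℕ
  elem : H
  height : ℕ∞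
  elem_mem : elem ∈ stage x (index + 1)
  mem_pPowSubgroup : ∀ i : ℕ, i ≤ height → elem ∈ pPowSubgroup p i
  not_mem : elem ∉ stage x index ⊔ heightAbove p height

namespace Witness

variable {p x}

def char (w : Witness p x) : H →+ 𝕋 :=
  (exists_addMonoidHom_circle_eq_zero_of_mem_apply_ne_zero w.not_mem).choose

theorem char_eq_zero (w : Witness p x) {g : H}
    (hg : g ∈ stage x w.index ⊔ heightAbove p w.height) : w.char g = 0 :=
  (exists_addMonoidHom_circle_eq_zero_of_mem_apply_ne_zero w.not_mem).choose_spec.1 g hg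

theorem char_elem_ne_zero (w : Witness p x) : w.char w.elem ≠ 0 :=
  (exists_addMonoidHom_circle_eq_zero_of_mem_apply_ne_zero w.not_mem).choose_spec.2

theorem height_le_of_elem_eq {w w' : Witness p x} (h : w.elem = w'.elem) :
    w'.height ≤ w.height := by
  by_contra! hlt
  obtain ⟨k, hk⟩ := ENat.ne_top_iff_exists.1 hlt.ne_top
  apply w.not_mem (AddSubgroup.mem_sup_right _)
  rw [← hk, heightAbove_coe, h]
  exact w'.mem_pPowSubgroup (k + 1)
    (by rw [Nat.cast_succ, hk]; exact Order.add_one_le_of_lt hlt)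

theorem injective_index_elem : Injective fun w : Witness p x => (w.index, w.elem) := by
  intro w w' h
  obtain ⟨hindex, helem⟩ := Prod.ext_iff.1 h
  exact Witness.ext hindex helem
    (le_antisymm (height_le_of_elem_eq helem.symm) (height_le_of_elem_eq helem))

instance [Countable H] : Countable (Witness p x) := injective_index_elem.countable

theorem char_mem_torsionLevel (hH : IsAbelianPGroup p H) (w : Witness p x) (g : H) :
    w.char g ∈ torsionLevel p (w.height + 1) := by
  by_cases htop : w.height = ⊤
  · obtain ⟨n, hn⟩ := hH g
    exact ⟨n, by simp [htop], by rw [← map_nsmul, hn, map_zero]⟩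
  · obtain ⟨k, hk⟩ := ENat.ne_top_iff_exists.1 htop
    refine ⟨k + 1, by rw [← hk, Nat.cast_succ], ?_⟩
    rw [← map_nsmul]
    exact w.char_eq_zero (AddSubgroup.mem_sup_right (by rw [← hk]; exact ⟨g, rfl⟩))

theorem finite_support_char (hH : IsAddTorsion H) (hx : Surjective x) (g : H) :
    (support fun w : Witness p x => w.char g).Finite := by
  obtain ⟨m, hm⟩ := exists_mem_stage x hx g
  refine (((finite_Iio m).prod (finite_stage x hH m)).preimage
    injective_index_elem.injOn).subset fun w hw => ?_
  have hlt : w.index < m := by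
    by_contra! hle
    exact hw (w.char_eq_zero (AddSubgroup.mem_sup_left (stage_mono x hle hm)))
  exact ⟨hlt, stage_mono x hlt w.elem_mem⟩

theorem exists_char_ne_zero {m : ℕ} {g : H} {k : ℕ∞} (hg : g ∈ stage x m)
    (hgk : ∀ i : ℕ, i ≤ k → g ∈ pPowSubgroup p i) (hgk' : g ∉ heightAbove p k) :
    ∃ w : Witness p x, w.height ≤ k ∧ w.char g ≠ 0 := by
  induction m generalizing g with
  | zero =>
    rw [stage_zero, AddSubgroup.mem_bot] at hg
    exact absurd (hg ▸ zero_mem _) hgk'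
  | succ n ih =>
    by_cases hsplit : g ∈ stage x n ⊔ heightAbove p k
    · -- `g = f + t` with `f` from the previous stage of the same height as `g`, while `t` is
      -- killed by every witness of height `≤ k`.
      obtain ⟨f, hf, t, ht, rfl⟩ := AddSubgroup.mem_sup.1 hsplit
      have htk (i : ℕ) (hi : i ≤ k) : t ∈ pPowSubgroup p i :=
        heightAbove_le_pPowSubgroup (le_add_right hi) ht
      obtain ⟨w, hwk, hw⟩ := ih hf (fun i hi => by simpa using sub_mem (hgk i hi) (htk i hi))
        (fun hf' => hgk' (add_mem hf' ht))
      refine ⟨w, hwk, ?_⟩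
      rwa [map_add, w.char_eq_zero (AddSubgroup.mem_sup_right (heightAbove_anti hwk ht)),
        add_zero]
    · exact ⟨⟨n, g, k, hg, hgk, hsplit⟩, le_rfl, char_elem_ne_zero _⟩

theorem exists_char_ne_zero_of_mem_pPowSubgroup {m k : ℕ} {g : H} (hg : g ∈ stage x m)
    (hk : g ∈ pPowSubgroup p k) (hk' : g ∉ pPowSubgroup p (k + 1)) :
    ∃ w : Witness p x, w.height ≤ k ∧ w.char g ≠ 0 :=
  exists_char_ne_zero hg (fun _ hi => pPowSubgroup_anti (by exact_mod_cast hi) hk) hk'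

theorem exists_char_ne_zero_of_ne_zero (hx : Surjective x) {g : H} (hg : g ≠ 0) :
    ∃ w : Witness p x, w.char g ≠ 0 := by
  obtain ⟨m, hm⟩ := exists_mem_stage x hx g
  by_cases hfin : ∃ a, g ∉ pPowSubgroup p a
  · obtain ⟨a, ha⟩ := hfin
    obtain ⟨k, -, hk, hk'⟩ := exists_mem_pPowSubgroup_not_mem_succ ha
    obtain ⟨w, -, hw⟩ := exists_char_ne_zero_of_mem_pPowSubgroup hm hk hk'
    exact ⟨w, hw⟩
  · push Not at hfin
    obtain ⟨w, -, hw⟩ :=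
      exists_char_ne_zero (k := ⊤) hm (fun i _ => hfin i) (by simpa using hg)
    exact ⟨w, hw⟩

end Witness

end Witnesses

def Omega1 : Type := (aleph 1).out

theorem mk_omega1 : #Omega1 = aleph 1 := Cardinal.mk_out _

/-- `ℵ₁` copies of each cyclic group `ℤ/p^k` and of the Prüfer group `ℤ(p^∞)`. -/
abbrev UniversalGroup (p : ℕ) : Type :=
  restrictedSum fun i : ℕ∞ × Omega1 => torsionLevel p i.1

theorem isAbelianPGroup_universalGroup (p : ℕ) : IsAbelianPGroup p (UniversalGroup p) :=
  isAbelianPGroup_restrictedSum _ fun _ _ ⟨n, _, hn⟩ => ⟨n, hn⟩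

theorem mk_universalGroup {p : ℕ} (hp : 1 < p) : #(UniversalGroup p) = aleph 1 := by
  have : Countable 𝕋 := Quotient.countable
  have hI : #(ℕ∞ × Omega1) = aleph 1 := by
    rw [mk_prod, lift_id, lift_id, mk_omega1, mk_eq_aleph0 ℕ∞]
    exact aleph0_mul_eq (aleph0_le_aleph 1)
  have : Infinite (ℕ∞ × Omega1) := infinite_iff.2 (hI ▸ aleph0_le_aleph 1)
  set q : 𝕋 := ((1 / p : ℚ) : 𝕋)
  have hq : addOrderOf q = p := AddCircle.addOrderOf_period_div (by omega)
  have hq0 : q ≠ 0 := fun h => by simp [h] at hq; omega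
  have : Nontrivial 𝕋 := ⟨⟨q, 0, hq0⟩⟩
  have hq_mem : q ∈ torsionLevel p 1 :=
    ⟨1, le_rfl, by rw [pow_one, ← hq]; exact addOrderOf_nsmul_eq_zero q⟩
  refine le_antisymm ?_ ?_
  · calc #(UniversalGroup p) ≤ #(ℕ∞ × Omega1 →₀ 𝕋) := mk_subtype_le _
      _ = aleph 1 := by
        rw [mk_finsupp_of_infinite, hI]
        exact max_eq_left (mk_le_aleph0.trans (aleph0_le_aleph 1))
  · have hmem (w : Omega1) : Finsupp.single ((1 : ℕ∞), w) q ∈ restrictedSum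
        (fun i : ℕ∞ × Omega1 => torsionLevel p i.1) := mem_restrictedSum.2 fun i => by
      classical
      rw [Finsupp.single_apply]
      split_ifs with h
      · exact h ▸ hq_mem
      · exact zero_mem _
    rw [← mk_omega1]
    refine mk_le_of_injective (f := fun w => ⟨_, hmem w⟩) fun w w' h => ?_
    exact (Prod.ext_iff.1 (Finsupp.single_left_injective hq0 (congrArg Subtype.val h))).2

section Embedding

variable {p : ℕ} {H : Type} [AddCommGroup H] {x : ℕ → H} {f : H →+ UniversalGroup p}
  {e : Witness p x → Omega1}

theorem injective_of_apply_witness (hx : Surjective x)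
    (hf : ∀ w g, (f g : ℕ∞ × Omega1 →₀ 𝕋) (w.height + 1, e w) = w.char g) :
    Injective f := by
  refine (injective_iff_map_eq_zero f).2 fun g hg => by_contra fun hg0 => ?_
  obtain ⟨w, hw⟩ := Witness.exists_char_ne_zero_of_ne_zero hx hg0
  rw [← hf, hg] at hw
  exact hw rfl

theorem exists_nsmul_eq_of_apply_witness (hp : p.Prime) (hH : IsAbelianPGroup p H)
    (hx : Surjective x)
    (hf : ∀ w g, (f g : ℕ∞ × Omega1 →₀ 𝕋) (w.height + 1, e w) = w.char g)
    {n : ℕ} {g : H} (hu : ∃ u, n • u = f g) : ∃ g', n • g' = g := by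
  obtain ⟨u, hu⟩ := hu
  rcases eq_or_ne n 0 with rfl | hn
  · exact ⟨0, injective_of_apply_witness hx hf
      (by rw [← hu, zero_nsmul, zero_nsmul, map_zero])⟩
  refine IsAbelianPGroup.exists_nsmul_eq_of_mem_pPowSubgroup hp hH hn
    (by_contra fun hg => ?_)
  obtain ⟨k, hka, hk, hk'⟩ := exists_mem_pPowSubgroup_not_mem_succ hg
  obtain ⟨m, hm⟩ := exists_mem_stage x hx g
  obtain ⟨w, hwk, hw⟩ := Witness.exists_char_ne_zero_of_mem_pPowSubgroup hm hk hk'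
  -- the coordinate of `u` at `w` is killed by `p ^ (w.height + 1)`, which divides `n`
  have hu_w :
      p ^ n.factorization p • (u : ℕ∞ × Omega1 →₀ 𝕋) (w.height + 1, e w) = 0 :=
    pow_nsmul_eq_zero_of_mem_torsionLevel (mem_restrictedSum.1 u.2 _) <| by
      calc w.height + 1 ≤ k + 1 := by gcongr
        _ ≤ n.factorization p := by exact_mod_cast hka
  apply hw
  rw [← hf, ← hu, ← Nat.ordProj_mul_ordCompl_eq_self n p]
  simp [mul_nsmul, hu_w]

theorem exists_isPureEmbedding_universalGroup (hp : p.Prime) [Countable H]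
    (hH : IsAbelianPGroup p H) : ∃ f : H →+ UniversalGroup p, IsPureEmbedding f := by
  obtain ⟨x, hx⟩ := exists_surjective_nat H
  obtain ⟨e⟩ : Nonempty (Witness p x ↪ Omega1) := by
    rw [← Cardinal.le_def, mk_omega1]
    exact mk_le_aleph0.trans (aleph0_le_aleph 1)
  let loc : Witness p x ↪ ℕ∞ × Omega1 :=
    ⟨fun w => (w.height + 1, e w), fun w w' h => e.injective (Prod.ext_iff.1 h).2⟩
  let f : H →+ UniversalGroup p := restrictedSumLift _ loc (fun w => w.char)
    (Witness.finite_support_char (IsAbelianPGroup.isAddTorsion hH hp.ne_zero) hx)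
    (fun w g => Witness.char_mem_torsionLevel hH w g)
  have hf (w : Witness p x) (g : H) :
      (f g : ℕ∞ × Omega1 →₀ 𝕋) (w.height + 1, e w) = w.char g :=
    restrictedSumLift_apply g w
  exact ⟨f, injective_of_apply_witness hx hf,
    fun _ _ => exists_nsmul_eq_of_apply_witness hp hH hx hf⟩

end Embedding

end PGroupUniversal

end

open PGroupUniversal in
theorem exists_p_group_aleph_one_universal_for_countable (p : ℕ) (hp : p.Prime) :
    ∃ (G : Type) (_ : AddCommGroup G), IsAbelianPGroup p G ∧
      Cardinal.mk G = Cardinal.aleph 1 ∧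
      ∀ (H : Type) (_ : AddCommGroup H), IsAbelianPGroup p H →
        Cardinal.mk H ≤ Cardinal.aleph0 → ∃ f : H →+ G, IsPureEmbedding f := by
  refine ⟨UniversalGroup p, inferInstance, isAbelianPGroup_universalGroup p,
    mk_universalGroup hp.one_lt, fun H _ hH hH_countable => ?_⟩
  have : Countable H := mk_le_aleph0_iff.1 hH_countable
  exact exists_isPureEmbedding_universalGroup hp hH
end

section
/- Let λ be an infinite cardinal. The abelian group ⊕_{p prime} (ℤ(p^∞))^{(⊕λ)} (the direct sum over all primes p of λ copies of the Prüfer group ℤ(p^∞)) is a torsion abelian group of cardinality λ, and every torsion abelian group G with |G| ≤ λ admits an injective group homomorphism into it. -/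
/-!
Every Prüfer group is torsion and divisible, hence so is `PruferSum λ`; it has `λ` countable
coordinates, so its cardinality is `λ`. For a torsion group `G` with `|G| ≤ λ`, each `G[p]` is
an `𝔽_p`-vector space of dimension at most `λ`, so it embeds into the `λ` copies of
`ℤ/p ⊆ ℤ(p^∞)`, and the socle `⨁ p, G[p]` embeds into `PruferSum λ`. By divisibility this
embedding extends to `G`, and the extension is injective because every nonzero element of a
torsion group has a nonzero multiple in the socle.
-/
open DirectSum

/-- `ℚ/ℤ`. -/
abbrev RatModInt : Type := ℚ ⧸ AddSubgroup.zmultiples (1 : ℚ)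

/-- The Prüfer group `ℤ(p^∞)`: the `p`-primary component of `ℚ/ℤ`, i.e. the subgroup of
elements annihilated by some power of `p`. -/
def Prufer (p : ℕ) : AddSubgroup RatModInt where
  carrier := {g : RatModInt | ∃ n : ℕ, p ^ n • g = 0}
  zero_mem' := ⟨0, smul_zero _⟩
  add_mem' := by
    rintro a b ⟨m, hm⟩ ⟨n, hn⟩
    refine ⟨m + n, ?_⟩
    have ha : p ^ (m + n) • a = 0 := by
      rw [pow_add, mul_comm, mul_smul, hm, smul_zero]
    have hb : p ^ (m + n) • b = 0 := by
      rw [pow_add, mul_smul, hn, smul_zero]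
    rw [smul_add, ha, hb, add_zero]
  neg_mem' := by
    rintro a ⟨n, hn⟩
    exact ⟨n, by rw [smul_neg, hn, neg_zero]⟩

/-- The direct sum, over all primes `p`, of `lam` copies of the Prüfer group `ℤ(p^∞)`. -/
abbrev PruferSum (lam : Cardinal) : Type :=
  ⨁ x : Nat.Primes × lam.out, ↥(Prufer x.1.1)

universe u

open Cardinal

instance Nat.Primes.fact_prime (p : Nat.Primes) : Fact (p : ℕ).Prime := ⟨p.2⟩

namespace DirectSum

variable {ι : Type*} {β : ι → Type*}

theorem isAddTorsion [∀ i, AddCommMonoid (β i)] (h : ∀ i, IsAddTorsion (β i)) :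
    IsAddTorsion (⨁ i, β i) := by
  classical
  intro x
  induction x using DirectSum.induction_on with
  | zero => exact .zero
  | of i b => exact (of β i).isOfFinAddOrder (h i b)
  | add x y hx hy => exact hx.add hy

noncomputable instance divisibleBy [∀ i, AddCommGroup (β i)] [∀ i, DivisibleBy (β i) ℤ] :
    DivisibleBy (⨁ i, β i) ℤ :=
  divisibleByOfSMulRightSurj _ _ fun {n} hn x => by
    obtain ⟨y, rfl⟩ := (DFinsupp.mapRange_surjective (fun i (v : β i) => n • v)
      fun _ => smul_zero n).2 (fun i => DivisibleBy.surjective_smul (β i) ℤ hn) x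
    exact ⟨y, DFinsupp.ext fun i => smul_apply n y i⟩

end DirectSum

theorem DFinsupp.mk_le_mk_finsupp {ι : Type u} {β : ι → Type u} [∀ i, Zero (β i)]
    {A : Type u} [Zero A] (f : ∀ i, β i → A) (hf0 : ∀ i, f i 0 = 0)
    (hf : ∀ i, Function.Injective (f i)) :
    #(Π₀ i, β i) ≤ #(ι →₀ A) := by
  classical
  refine mk_le_of_injective
    (f := fun x => (finsuppEquivDFinsupp (M := A)).symm (mapRange f hf0 x)) ?_
  exact (Equiv.injective _).comp ((mapRange_injective f hf0).2 hf)

theorem ZMod.exists_injective_addMonoidHom_of_addOrderOf_eq {A : Type*} [AddGroup A] {n : ℕ}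
    [NeZero n] {g : A} (hg : addOrderOf g = n) : ∃ χ : ZMod n →+ A, Function.Injective χ := by
  set χ := ZMod.lift n ⟨zmultiplesHom A g, by simp [← hg, addOrderOf_nsmul_eq_zero]⟩
  have hχ (k : ℕ) : χ k = k • g := by
    rw [← Int.cast_natCast]
    exact (ZMod.lift_coe n _ k).trans (natCast_zsmul g k)
  refine ⟨χ, injective_iff_map_eq_zero _ |>.2 fun c hc => ?_⟩
  rw [← ZMod.natCast_zmod_val c, hχ] at hc
  rw [← ZMod.val_eq_zero]
  have hdvd := addOrderOf_dvd_of_nsmul_eq_zero hc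
  rw [hg] at hdvd
  exact Nat.eq_zero_of_dvd_of_lt hdvd (ZMod.val_lt c)

theorem Module.exists_linearMap_finsupp_injective (K : Type*) {V ι : Type u} [DivisionRing K]
    [AddCommGroup V] [Module K V] (h : #V ≤ #ι) :
    ∃ f : V →ₗ[K] (ι →₀ K), Function.Injective f := by
  set b := Module.Basis.ofVectorSpace K V
  obtain ⟨j⟩ := (le_def _ _).1 ((mk_le_of_injective b.injective).trans h)
  exact ⟨Finsupp.lmapDomain K K j ∘ₗ b.repr,
    (Finsupp.mapDomain_injective j.injective).comp b.repr.injective⟩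

theorem exists_nsmul_eq_of_pow_nsmul_eq_zero {D : Type*} [AddCommGroup D] [DivisibleBy D ℤ]
    {p : ℕ} (hp : p.Prime) {k : ℕ} {x : D} (hx : p ^ k • x = 0) {n : ℕ} (hn : n ≠ 0) :
    ∃ y : D, (∃ j : ℕ, p ^ j • y = 0) ∧ n • y = x := by
  -- with `n = p ^ a * m`, divide `x` by `p ^ a` and then by `m`, which is invertible mod `p ^ k`
  obtain ⟨a, m, hpm, rfl⟩ := Nat.exists_eq_pow_mul_and_not_dvd hn p hp.ne_one
  obtain ⟨u, v, huv⟩ : IsCoprime (m : ℤ) ((p ^ k : ℕ) : ℤ) :=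
    Nat.isCoprime_iff_coprime.2 (((hp.coprime_iff_not_dvd).2 hpm).symm.pow_right k)
  obtain ⟨z, hz⟩ : ∃ z : D, p ^ a • z = x := by
    obtain ⟨z, hz⟩ := DivisibleBy.surjective_smul D ℤ
      (Int.natCast_ne_zero.2 (pow_ne_zero a hp.ne_zero)) x
    exact ⟨z, by simpa only [natCast_zsmul] using hz⟩
  refine ⟨u • z, ⟨k + a, ?_⟩, ?_⟩
  · rw [smul_comm, pow_add, mul_nsmul', hz, hx, smul_zero]
  · calc (p ^ a * m) • u • z = (u * m) • (p ^ a • z) := by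
          rw [← natCast_zsmul, ← natCast_zsmul, smul_smul, smul_smul]; push_cast; ring_nf
      _ = x := by
          rw [hz, show u * m = 1 - v * ((p ^ k : ℕ) : ℤ) by linarith, sub_smul, one_smul,
            mul_smul, natCast_zsmul, hx, smul_zero, sub_zero]

section Socle

variable {G : Type*} [AddCommGroup G]

theorem iSupIndep_torsionBy_primes :
    iSupIndep fun p : Nat.Primes => AddSubgroup.torsionBy G p := by
  rw [← iSupIndep_map_orderIso_iff AddSubgroup.toIntSubmodule, iSupIndep_iff_supIndep]
  refine fun s => Submodule.supIndep_torsionBy fun p _ q _ hpq => ?_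
  exact Nat.isCoprime_iff_coprime.2 <| (Nat.coprime_primes p.2 q.2).2 (Subtype.coe_ne_coe.2 hpq)

theorem exists_nsmul_ne_zero_mem_torsionBy_prime (hG : IsAddTorsion G) {a : G} (ha : a ≠ 0) :
    ∃ (p : Nat.Primes) (n : ℕ), n • a ≠ 0 ∧ n • a ∈ AddSubgroup.torsionBy G p := by
  have hm0 : addOrderOf a ≠ 0 := (hG a).addOrderOf_pos.ne'
  have hm1 : addOrderOf a ≠ 1 := mt AddMonoid.addOrderOf_eq_one_iff.1 ha
  set p := (addOrderOf a).minFac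
  have hp : addOrderOf ((addOrderOf a / p) • a) = p :=
    addOrderOf_nsmul_addOrderOf_sub hm0 (Nat.minFac_dvd _)
  refine ⟨⟨p, Nat.minFac_prime hm1⟩, addOrderOf a / p, fun h => ?_, ?_⟩
  · rw [h, addOrderOf_zero] at hp
    exact (Nat.minFac_prime hm1).ne_one hp.symm
  · have := addOrderOf_nsmul_eq_zero ((addOrderOf a / p) • a)
    rwa [hp, ← AddSubgroup.torsionBy.nsmul_iff] at this

theorem exists_injective_of_socle_embedding {D : Type*} [AddCommGroup D] [DivisibleBy D ℤ]
    (hG : IsAddTorsion G) (f : (⨁ p : Nat.Primes, AddSubgroup.torsionBy G p) →+ D)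
    (hf : Function.Injective f) : ∃ g : G →+ D, Function.Injective g := by
  classical
  set ι := DFinsupp.sumAddHom fun p : Nat.Primes => (AddSubgroup.torsionBy G p).subtype
  obtain ⟨g, hg⟩ := (Module.Baer.of_divisible D).extension_property_addMonoidHom ι
    iSupIndep_torsionBy_primes.dfinsuppSumAddHom_injective f
  refine ⟨g, injective_iff_map_eq_zero g |>.2 fun a ha => by_contra fun ha0 => ?_⟩
  obtain ⟨p, n, hn, hmem⟩ := exists_nsmul_ne_zero_mem_torsionBy_prime hG ha0
  have hy : f (DirectSum.of _ p ⟨n • a, hmem⟩) = 0 := by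
    rw [← hg, AddMonoidHom.comp_apply, DirectSum.of, DFinsupp.singleAddHom_apply,
      DFinsupp.sumAddHom_single, AddSubgroup.subtype_apply, map_nsmul, ha, smul_zero]
  have hy0 := hf (hy.trans (map_zero f).symm)
  exact hn (congrArg Subtype.val (DirectSum.of_injective p (hy0.trans (map_zero _).symm)))

end Socle

namespace Prufer

variable {p : ℕ}

theorem isAddTorsion (hp : p ≠ 0) : IsAddTorsion (Prufer p) := fun ⟨_, k, hk⟩ =>
  isOfFinAddOrder_iff_nsmul_eq_zero.2 ⟨p ^ k, pow_pos (Nat.pos_of_ne_zero hp) k, Subtype.ext hk⟩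

noncomputable instance divisibleBy [Fact p.Prime] : DivisibleBy (Prufer p) ℤ :=
  letI : DivisibleBy (Prufer p) ℕ :=
    divisibleByOfSMulRightSurj _ _ fun {n} hn ⟨x, k, hk⟩ => by
      obtain ⟨y, hy, rfl⟩ := exists_nsmul_eq_of_pow_nsmul_eq_zero Fact.out hk hn
      exact ⟨⟨y, hy⟩, rfl⟩
  AddGroup.divisibleByIntOfDivisibleByNat _

theorem exists_addOrderOf_eq (hp : 0 < p) : ∃ g : Prufer p, addOrderOf g = p := by
  set x : RatModInt := ↑((1 : ℕ) / (p : ℚ) * 1)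
  have hx : addOrderOf x = p := AddCircle.addOrderOf_div_of_gcd_eq_one hp (Nat.gcd_one_left p)
  have hmem : x ∈ Prufer p := ⟨1, by rw [pow_one, ← hx]; exact addOrderOf_nsmul_eq_zero x⟩
  exact ⟨⟨x, hmem⟩, (AddSubgroup.addOrderOf_mk _ _).trans hx⟩

theorem exists_ne_zero (hp : 1 < p) : ∃ g : Prufer p, g ≠ 0 :=
  have ⟨g, hg⟩ := exists_addOrderOf_eq (zero_lt_one.trans hp)
  ⟨g, fun h => by rw [h, addOrderOf_zero] at hg; exact hp.ne hg⟩

theorem exists_injective_zmod [Fact p.Prime] :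
    ∃ χ : ZMod p →+ Prufer p, Function.Injective χ :=
  have ⟨_, hg⟩ := exists_addOrderOf_eq (Fact.out : p.Prime).pos
  ZMod.exists_injective_addMonoidHom_of_addOrderOf_eq hg

end Prufer

namespace PruferSum

variable {lam : Cardinal.{0}}

noncomputable def curryEquiv (lam : Cardinal.{0}) :
    (⨁ p : Nat.Primes, ⨁ _ : lam.out, Prufer p) ≃+ PruferSum lam :=
  DirectSum.sigmaCurryEquiv.symm.trans (DirectSum.equivCongrLeft (Equiv.sigmaEquivProd _ _))

theorem exists_torsionBy_embedding {G : Type} [AddCommGroup G] (hG : #G ≤ lam) (p : ℕ)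
    [Fact p.Prime] :
    ∃ ψ : AddSubgroup.torsionBy G p →+ ⨁ _ : lam.out, Prufer p, Function.Injective ψ := by
  classical
  let _ := AddSubgroup.torsionBy.zmodModule (A := G) (n := p)
  obtain ⟨f, hf⟩ := Module.exists_linearMap_finsupp_injective (ZMod p)
    (V := AddSubgroup.torsionBy G p) (ι := lam.out)
    ((mk_subtype_le _).trans (hG.trans_eq (mk_out lam).symm))
  obtain ⟨χ, hχ⟩ := Prufer.exists_injective_zmod (p := p)
  exact ⟨finsuppAddEquivDFinsupp.toAddMonoidHom.comp
      ((Finsupp.mapRange.addMonoidHom χ).comp f.toAddMonoidHom),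
    finsuppAddEquivDFinsupp.injective.comp
      ((Finsupp.mapRange_injective _ χ.map_zero hχ).comp hf)⟩

theorem exists_socle_embedding {G : Type} [AddCommGroup G] (hG : #G ≤ lam) :
    ∃ f : (⨁ p : Nat.Primes, AddSubgroup.torsionBy G p) →+ PruferSum lam,
      Function.Injective f := by
  choose ψ hψ using fun p : Nat.Primes => exists_torsionBy_embedding hG p
  exact ⟨(curryEquiv lam).toAddMonoidHom.comp (DFinsupp.mapRange.addMonoidHom ψ),
    (curryEquiv lam).injective.comp
      ((DFinsupp.mapRange_injective (fun p => ψ p) fun p => (ψ p).map_zero).2 hψ)⟩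

theorem mk_le (hlam : ℵ₀ ≤ lam) : #(PruferSum lam) ≤ lam := by
  have : Nonempty lam.out :=
    mk_ne_zero_iff.1 <| (mk_out lam).symm ▸ (aleph0_pos.trans_le hlam).ne'
  have : Countable RatModInt := QuotientAddGroup.mk_surjective.countable
  obtain ⟨g, hg⟩ := Prufer.exists_ne_zero (p := 2) one_lt_two
  have : Nontrivial RatModInt :=
    nontrivial_of_ne (g : RatModInt) 0 (mt ZeroMemClass.coe_eq_zero.1 hg)
  calc #(PruferSum lam)
      ≤ #(Nat.Primes × lam.out →₀ RatModInt) :=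
        DFinsupp.mk_le_mk_finsupp (β := fun x : Nat.Primes × lam.out => Prufer x.1.1)
          (fun _ => Subtype.val) (fun x => (Prufer x.1.1).coe_zero)
          fun _ => Subtype.val_injective
    _ = max (ℵ₀ * lam) #RatModInt := by
        rw [mk_finsupp_of_infinite, mk_prod, lift_id, lift_id, mk_eq_aleph0, mk_out]
    _ ≤ lam := max_le (aleph0_mul_eq hlam).le (mk_le_aleph0.trans hlam)

theorem le_mk (lam : Cardinal.{0}) : lam ≤ #(PruferSum lam) := by
  classical
  obtain ⟨g, hg⟩ := Prufer.exists_ne_zero (p := 2) one_lt_two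
  refine (mk_out lam).symm.trans_le <| mk_le_of_injective (f := fun i => DirectSum.of
    (fun x : Nat.Primes × lam.out => Prufer x.1.1) (⟨2, Nat.prime_two⟩, i) g) ?_
  intro i j hij
  rcases (DFinsupp.single_eq_single_iff _ _ _ _).1 hij with ⟨h, -⟩ | ⟨h, -⟩
  · exact congrArg Prod.snd h
  · exact absurd h hg

end PruferSum

theorem pruferSum_universal_torsion (lam : Cardinal) (hlam : Cardinal.aleph0 ≤ lam) :
    AddMonoid.IsTorsion (PruferSum lam) ∧ Cardinal.mk (PruferSum lam) = lam ∧
      ∀ (G : Type) (_ : AddCommGroup G), AddMonoid.IsTorsion G → Cardinal.mk G ≤ lam →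
        ∃ f : G →+ PruferSum lam, Function.Injective f := by
  refine ⟨DirectSum.isAddTorsion fun x => Prufer.isAddTorsion x.1.2.ne_zero,
    (PruferSum.mk_le hlam).antisymm (PruferSum.le_mk lam), fun G _ hG hGcard => ?_⟩
  obtain ⟨f, hf⟩ := PruferSum.exists_socle_embedding hGcard
  exact exists_injective_of_socle_embedding hG f hf
end
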